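/- If three triangles in the plane with pairwise disjoint interiors pairwise share edges (forming K₃ in the dual graph), then the three triangles have exactly 4 vertices in total, and in particular each triangle's vertex set is contained in the union of the vertex sets of the other two. -/

import Mathlib

open scoped Classical

/-- A nondegenerate triangle in the plane, given by its vertex set. -/
def IsTriangle (V : Finset (EuclideanSpace ℝ (Fin 2))) : Prop :=
  V.card = 3 ∧ AffineIndependent ℝ (fun x : V => (x : EuclideanSpace ℝ (Fin 2)))

/-- Two triangles share an edge: they have exactly 2 common vertices and their
intersection is the convex hull of those common vertices. -/
def SharesEdge (V W : Finset (EuclideanSpace ℝ (Fin 2))) : Prop :=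
  (V ∩ W).card = 2 ∧
    convexHull ℝ (V : Set (EuclideanSpace ℝ (Fin 2))) ∩
        convexHull ℝ (W : Set (EuclideanSpace ℝ (Fin 2))) =
      convexHull ℝ ((V ∩ W : Finset (EuclideanSpace ℝ (Fin 2))) : Set (EuclideanSpace ℝ (Fin 2)))

/-!
Any two of the three shared edges lie in a common triangle, so they meet: the triple
intersection `T = V₁ ∩ V₂ ∩ V₃` has one or two points. If `T` were an edge `ab` common to all
three triangles, two of the three apexes would lie on the same side of the line `ab`, and two
triangles on a common edge with apexes on the same side have overlapping interiors. Hence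
`T` is a single vertex, and inclusion–exclusion leaves exactly four vertices.
-/

open Set Filter Topology

namespace AffineBasis

variable {ι E : Type*} [Fintype ι] [NormedAddCommGroup E] [NormedSpace ℝ E]
  {B B' : AffineBasis ι ℝ E} {j : ι}

theorem eventually_lineMap_mem_interior_convexHull {q c : E}
    (hq : ∀ i ≠ j, 0 < B.coord i q) (hqj : B.coord j q = 0) (hc : 0 < B.coord j c) :
    ∀ᶠ t in 𝓝[>] (0 : ℝ), AffineMap.lineMap q c t ∈ interior (convexHull ℝ (range B)) := by
  simp only [B.interior_convexHull, mem_ofPred_eq, AffineMap.apply_lineMap]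
  refine eventually_all.2 fun i => ?_
  by_cases hi : i = j
  · subst hi
    filter_upwards [self_mem_nhdsWithin] with t (ht : 0 < t)
    simpa [hqj, AffineMap.lineMap_apply_ring] using mul_pos ht hc
  · have hcont : Continuous fun t : ℝ => AffineMap.lineMap (B.coord i q) (B.coord i c) t :=
      AffineMap.lineMap_continuous
    exact nhdsWithin_le_nhds <| (hcont.tendsto' 0 _ (by simp)).eventually (lt_mem_nhds (hq i hi))

-- Both sides are affine in `x` and vanish on the common facet.
theorem coord_eq_mul_of_forall_ne (h : ∀ i ≠ j, B i = B' i) (x : E) :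
    B.coord j x = B'.coord j x * B.coord j (B' j) := by
  conv_lhs => rw [← B'.affineCombination_coord_eq_self x]
  rw [Finset.map_affineCombination _ _ _ (B'.sum_coord_apply_eq_one x),
    Finset.affineCombination_eq_linear_combination _ _ _ (B'.sum_coord_apply_eq_one x),
    Finset.sum_eq_single j]
  · rfl
  · intro i _ hi
    simp [← h i hi, B.coord_apply_ne hi.symm]
  · simp

theorem coord_ne_zero_of_forall_ne (h : ∀ i ≠ j, B i = B' i) : B.coord j (B' j) ≠ 0 := by
  intro h0
  have := coord_eq_mul_of_forall_ne (fun i hi => (h i hi).symm) (B' j)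
  simp [h0] at this

variable [DecidableEq ι]

theorem coord_centroid_erase_of_ne (B : AffineBasis ι ℝ E) {i : ι} (hi : i ≠ j) :
    0 < B.coord i ((Finset.univ.erase j).centroid ℝ B) := by
  have hmem : i ∈ Finset.univ.erase j := Finset.mem_erase.2 ⟨hi, Finset.mem_univ i⟩
  rw [B.coord_apply_centroid hmem]
  exact inv_pos.2 (Nat.cast_pos.2 (Finset.card_pos.2 ⟨i, hmem⟩))

theorem coord_centroid_erase_self [Nontrivial ι] (B : AffineBasis ι ℝ E) (j : ι) :
    B.coord j ((Finset.univ.erase j).centroid ℝ B) = 0 := by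
  obtain ⟨k, hk⟩ := exists_ne j
  exact B.coord_apply_combination_of_notMem (Finset.notMem_erase j _)
    (Finset.sum_centroidWeights_eq_one_of_nonempty ℝ _
      ⟨k, Finset.mem_erase.2 ⟨hk, Finset.mem_univ k⟩⟩)

theorem centroid_erase_eq_of_forall_ne (h : ∀ i ≠ j, B i = B' i) :
    (Finset.univ.erase j).centroid ℝ B = (Finset.univ.erase j).centroid ℝ B' :=
  Finset.affineCombination_congr _ (fun _ _ => rfl) fun i hi => h i (Finset.ne_of_mem_erase hi)

theorem not_disjoint_interior_convexHull [Nontrivial ι] (h : ∀ i ≠ j, B i = B' i)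
    (hpos : 0 < B.coord j (B' j)) :
    ¬ Disjoint (interior (convexHull ℝ (range B))) (interior (convexHull ℝ (range B'))) := by
  -- Walk from the centroid of the common facet towards the apex of `B'`.
  have hq : (Finset.univ.erase j).centroid ℝ B = (Finset.univ.erase j).centroid ℝ B' :=
    centroid_erase_eq_of_forall_ne h
  have hB := eventually_lineMap_mem_interior_convexHull
    (fun i hi => B.coord_centroid_erase_of_ne hi) (B.coord_centroid_erase_self j) hpos
  have hB' := eventually_lineMap_mem_interior_convexHull (B := B') (c := B' j)
    (fun i hi => hq ▸ B'.coord_centroid_erase_of_ne hi) (hq ▸ B'.coord_centroid_erase_self j)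
    (by simp)
  obtain ⟨t, htB, htB'⟩ := (hB.and hB').exists
  exact not_disjoint_iff.2 ⟨_, htB, htB'⟩

theorem not_disjoint_interior_convexHull_of_forall_ne [Nontrivial ι]
    {B₁ B₂ B₃ : AffineBasis ι ℝ E}
    (h₁₂ : ∀ i ≠ j, B₁ i = B₂ i) (h₁₃ : ∀ i ≠ j, B₁ i = B₃ i)
    (hd₁₂ : Disjoint (interior (convexHull ℝ (range B₁))) (interior (convexHull ℝ (range B₂))))
    (hd₁₃ : Disjoint (interior (convexHull ℝ (range B₁))) (interior (convexHull ℝ (range B₃)))) :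
    ¬ Disjoint (interior (convexHull ℝ (range B₂))) (interior (convexHull ℝ (range B₃))) := by
  have h₂ : B₁.coord j (B₂ j) < 0 := (coord_ne_zero_of_forall_ne h₁₂).lt_of_le <|
    not_lt.1 fun hpos => not_disjoint_interior_convexHull h₁₂ hpos hd₁₂
  have h₃ : B₁.coord j (B₃ j) < 0 := (coord_ne_zero_of_forall_ne h₁₃).lt_of_le <|
    not_lt.1 fun hpos => not_disjoint_interior_convexHull h₁₃ hpos hd₁₃
  have h₂₃ : ∀ i ≠ j, B₂ i = B₃ i := fun i hi => (h₁₂ i hi).symm.trans (h₁₃ i hi)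
  -- `B₂ j` and `B₃ j` are both on the negative side of the facet for `B₁`, so on one side for `B₂`.
  refine not_disjoint_interior_convexHull h₂₃ (pos_of_mul_neg_left ?_ h₂.le)
  rw [← coord_eq_mul_of_forall_ne h₁₂ (B₃ j)]
  exact h₃

end AffineBasis

namespace Finset

variable {α : Type*} [DecidableEq α] {A B C : Finset α}

theorem subset_union_of_card_add_card_inter_le
    (h : #A + #(A ∩ B ∩ C) ≤ #(A ∩ B) + #(A ∩ C)) : A ⊆ B ∪ C := by
  have hunion := card_union_add_card_inter (A ∩ B) (A ∩ C)
  rw [← inter_union_distrib_left, ← inter_inter_distrib_left, ← inter_assoc] at hunion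
  rw [← inter_eq_left]
  exact eq_of_subset_of_card_le inter_subset_left (by omega)

theorem card_union_union_eq_four_of_card_inter_eq_two
    (hA : #A = 3) (hB : #B = 3) (hC : #C = 3)
    (hAB : #(A ∩ B) = 2) (hAC : #(A ∩ C) = 2) (hBC : #(B ∩ C) = 2) (hABC : #(A ∩ B ∩ C) ≠ 2) :
    #(A ∪ B ∪ C) = 4 ∧ A ⊆ B ∪ C ∧ B ⊆ A ∪ C ∧ C ⊆ A ∪ B := by
  have hABC_one : #(A ∩ B ∩ C) = 1 := by
    have hne := inter_nonempty_of_card_lt_card_add_card (inter_subset_left : A ∩ B ⊆ A)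
      (inter_subset_left : A ∩ C ⊆ A) (by omega)
    rw [← inter_inter_distrib_left, ← inter_assoc] at hne
    have hle := card_le_card (inter_subset_left : A ∩ B ∩ C ⊆ A ∩ B)
    have := hne.card_pos
    omega
  have hA' : A ⊆ B ∪ C := subset_union_of_card_add_card_inter_le (by omega)
  have hB' : B ⊆ A ∪ C := subset_union_of_card_add_card_inter_le (by rw [inter_comm B A]; omega)
  have hC' : C ⊆ A ∪ B := subset_union_of_card_add_card_inter_le
    (by rw [inter_comm C A, inter_right_comm, inter_comm C B]; omega)
  have hunion := card_union_add_card_inter B C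
  rw [union_assoc, union_eq_right.2 hA']
  exact ⟨by omega, hA', hB', hC'⟩

end Finset

local notation "E²" => EuclideanSpace ℝ (Fin 2)

theorem IsTriangle.exists_affineBasis {V : Finset E²} (hV : IsTriangle V) {a b : E²}
    (ha : a ∈ V) (hb : b ∈ V) (hab : a ≠ b) :
    ∃ B : AffineBasis (Fin 3) ℝ E², B 0 = a ∧ B 1 = b ∧ range B = V := by
  obtain ⟨c, hc, hcab⟩ := Finset.exists_mem_notMem_of_card_lt_card
    (s := {a, b}) (t := V) (by rw [hV.1]; exact (Finset.card_le_two).trans_lt (by norm_num))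
  have hca : c ≠ a := fun h => hcab (by simp [h])
  have hcb : c ≠ b := fun h => hcab (by simp [h])
  have hV' : ({a, b, c} : Finset E²) = V :=
    Finset.eq_of_subset_of_card_le (by simp [Finset.insert_subset_iff, ha, hb, hc])
      (by rw [hV.1, Finset.card_insert_of_notMem (by simp [hab, hca.symm]),
        Finset.card_pair hcb.symm])
  have hrange : range ![a, b, c] = (V : Set E²) := by
    rw [← hV']; ext; simp [Matrix.range_cons, Matrix.range_empty, or_comm, or_left_comm]
  have hind : AffineIndependent ℝ ![a, b, c] := by
    refine AffineIndependent.of_set_of_injective (by rw [hrange]; exact hV.2) ?_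
    intro i j hij
    fin_cases i <;> fin_cases j <;> simp_all [eq_comm]
  exact ⟨⟨_, hind, by rw [hind.affineSpan_eq_top_iff_card_eq_finrank_add_one]; simp⟩,
    rfl, rfl, hrange⟩

theorem IsTriangle.card_inter_inter_ne_two {V₁ V₂ V₃ : Finset E²}
    (h1 : IsTriangle V₁) (h2 : IsTriangle V₂) (h3 : IsTriangle V₃)
    (hd12 : Disjoint (interior (convexHull ℝ (V₁ : Set E²)))
      (interior (convexHull ℝ (V₂ : Set E²))))
    (hd13 : Disjoint (interior (convexHull ℝ (V₁ : Set E²)))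
      (interior (convexHull ℝ (V₃ : Set E²))))
    (hd23 : Disjoint (interior (convexHull ℝ (V₂ : Set E²)))
      (interior (convexHull ℝ (V₃ : Set E²)))) :
    (V₁ ∩ V₂ ∩ V₃).card ≠ 2 := by
  intro hT
  obtain ⟨a, b, hab, hT⟩ := Finset.card_eq_two.1 hT
  have hmem : ∀ x ∈ ({a, b} : Finset E²), x ∈ V₁ ∧ x ∈ V₂ ∧ x ∈ V₃ := fun x hx => by
    rw [← hT] at hx; simpa [and_assoc] using hx
  have ha := hmem a (by simp)
  have hb := hmem b (by simp)
  obtain ⟨B₁, hB₁a, hB₁b, hB₁⟩ := h1.exists_affineBasis ha.1 hb.1 hab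
  obtain ⟨B₂, hB₂a, hB₂b, hB₂⟩ := h2.exists_affineBasis ha.2.1 hb.2.1 hab
  obtain ⟨B₃, hB₃a, hB₃b, hB₃⟩ := h3.exists_affineBasis ha.2.2 hb.2.2 hab
  have hagree : ∀ {B B' : AffineBasis (Fin 3) ℝ E²}, B 0 = a → B 1 = b → B' 0 = a → B' 1 = b →
      ∀ i ≠ 2, B i = B' i := by
    intro B B' h0 h1 h0' h1' i hi
    fin_cases i <;> simp_all
  rw [← hB₁, ← hB₂] at hd12
  rw [← hB₁, ← hB₃] at hd13
  rw [← hB₂, ← hB₃] at hd23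
  exact AffineBasis.not_disjoint_interior_convexHull_of_forall_ne
    (hagree hB₁a hB₁b hB₂a hB₂b) (hagree hB₁a hB₁b hB₃a hB₃b) hd12 hd13 hd23

/-- Three triangles with pairwise disjoint interiors that pairwise share edges
(forming `K₃` in the dual graph) have exactly 4 vertices in total, and each
triangle's vertex set is contained in the union of the other two. -/
theorem K3_four_vertices (V₁ V₂ V₃ : Finset (EuclideanSpace ℝ (Fin 2)))
    (h1 : IsTriangle V₁) (h2 : IsTriangle V₂) (h3 : IsTriangle V₃)
    (hd12 : Disjoint (interior (convexHull ℝ (V₁ : Set (EuclideanSpace ℝ (Fin 2)))))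
      (interior (convexHull ℝ (V₂ : Set (EuclideanSpace ℝ (Fin 2))))))
    (hd13 : Disjoint (interior (convexHull ℝ (V₁ : Set (EuclideanSpace ℝ (Fin 2)))))
      (interior (convexHull ℝ (V₃ : Set (EuclideanSpace ℝ (Fin 2))))))
    (hd23 : Disjoint (interior (convexHull ℝ (V₂ : Set (EuclideanSpace ℝ (Fin 2)))))
      (interior (convexHull ℝ (V₃ : Set (EuclideanSpace ℝ (Fin 2))))))
    (hs12 : SharesEdge V₁ V₂) (hs13 : SharesEdge V₁ V₃) (hs23 : SharesEdge V₂ V₃) :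
    (V₁ ∪ V₂ ∪ V₃).card = 4 ∧
      V₁ ⊆ V₂ ∪ V₃ ∧ V₂ ⊆ V₁ ∪ V₃ ∧ V₃ ⊆ V₁ ∪ V₂ :=
  Finset.card_union_union_eq_four_of_card_inter_eq_two h1.1 h2.1 h3.1 hs12.1 hs13.1 hs23.1
    (IsTriangle.card_inter_inter_ne_two h1 h2 h3 hd12 hd13 hd23)
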